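/- Let A be a finite dimensional algebra over a field K, let M be a finitely generated right A-module, and let S be a simple submodule of M with grade S < ∞. Then grade S ≤ pdim M, the projective dimension of M. -/

import Mathlib

/-! ## Basic homological algebra infrastructure for (right) modules over a ring -/

universe u

section Core

variable (B : Type u) [Ring B]

/-- A projective resolution `⋯ → P 1 → P 0 → M → 0` of a module `M`. -/
structure ProjRes (M : Type u) [AddCommGroup M] [Module B M] where
  P : ℕ → Type u
  [acg : ∀ n, AddCommGroup (P n)]
  [mod : ∀ n, Module B (P n)]
  proj : ∀ n, Module.Projective B (P n)
  d : (n : ℕ) → P (n + 1) →ₗ[B] P n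
  π : P 0 →ₗ[B] M
  surj : Function.Surjective π
  exact_at_zero : Function.Exact (d 0) π
  exact : ∀ n, Function.Exact (d (n + 1)) (d n)

attribute [instance] ProjRes.acg ProjRes.mod

/-- An injective coresolution `0 → M → I 0 → I 1 → ⋯` of a module `M`. -/
structure InjCores (M : Type u) [AddCommGroup M] [Module B M] where
  I : ℕ → Type u
  [acg : ∀ n, AddCommGroup (I n)]
  [mod : ∀ n, Module B (I n)]
  inj : ∀ n, Module.Injective B (I n)
  ι : M →ₗ[B] I 0
  d : (n : ℕ) → I n →ₗ[B] I (n + 1)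
  mono : Function.Injective ι
  exact_at_zero : Function.Exact ι (d 0)
  exact : ∀ n, Function.Exact (d n) (d (n + 1))

attribute [instance] InjCores.acg InjCores.mod

variable {B}

/-- A submodule `N ≤ M` is essential if it intersects every nonzero submodule
nontrivially. -/
def IsEssentialSub {M : Type u} [AddCommGroup M] [Module B M] (N : Submodule B M) : Prop :=
  ∀ L : Submodule B M, L ≠ ⊥ → N ⊓ L ≠ ⊥

/-- A submodule `N ≤ M` is superfluous if `N ⊔ L = ⊤` forces `L = ⊤`. -/
def IsSuperfluousSub {M : Type u} [AddCommGroup M] [Module B M] (N : Submodule B M) : Prop :=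
  ∀ L : Submodule B M, N ⊔ L = ⊤ → L = ⊤

variable (B)

/-- A minimal injective coresolution: an injective coresolution in which the image of each
map into `I n` is an essential submodule of `I n`. -/
structure MinInjCores (M : Type u) [AddCommGroup M] [Module B M] extends InjCores B M where
  essential_at_zero : IsEssentialSub (LinearMap.range ι)
  essential : ∀ n, IsEssentialSub (LinearMap.range (d n))

/-- A minimal projective resolution: a projective resolution in which all the kernels
are superfluous submodules. -/
structure MinProjRes (M : Type u) [AddCommGroup M] [Module B M] extends ProjRes B M where
  superfluous_at_zero : IsSuperfluousSub (LinearMap.ker π)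
  superfluous : ∀ n, IsSuperfluousSub (LinearMap.ker (d n))

/-- The projective dimension of a module, defined as the infimum (in `ℕ∞`) of the lengths
of projective resolutions of the module. -/
noncomputable def pdim (M : Type u) [AddCommGroup M] [Module B M] : ℕ∞ :=
  sInf ((fun n : ℕ => (n : ℕ∞)) ''
    {n | ∃ R : ProjRes B M, ∀ i, n < i → Subsingleton (R.P i)})

/-- The injective dimension of a module, defined as the infimum (in `ℕ∞`) of the lengths
of injective coresolutions of the module. -/
noncomputable def idim (M : Type u) [AddCommGroup M] [Module B M] : ℕ∞ :=
  sInf ((fun n : ℕ => (n : ℕ∞)) ''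
    {n | ∃ R : InjCores B M, ∀ i, n < i → Subsingleton (R.I i)})

variable {B}

/-- The cochain groups `Hom_B(P n, N)` of the complex computing `Ext_B(M, N)`. -/
def homC {M : Type u} [AddCommGroup M] [Module B M] (R : ProjRes B M)
    (N : Type u) [AddCommGroup N] [Module B N] (n : ℕ) : Type u :=
  R.P n →ₗ[B] N

noncomputable instance {M : Type u} [AddCommGroup M] [Module B M] (R : ProjRes B M)
    (N : Type u) [AddCommGroup N] [Module B N] (n : ℕ) : AddCommGroup (homC R N n) :=
  inferInstanceAs (AddCommGroup (R.P n →ₗ[B] N))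

/-- The differential of the complex `Hom_B(P •, N)`, given by precomposition with `R.d n`. -/
noncomputable def extδ {M : Type u} [AddCommGroup M] [Module B M] (R : ProjRes B M)
    (N : Type u) [AddCommGroup N] [Module B N] (n : ℕ) : homC R N n →+ homC R N (n + 1) where
  toFun f := (f : R.P n →ₗ[B] N).comp (R.d n)
  map_zero' := LinearMap.zero_comp _
  map_add' f g := LinearMap.add_comp _ _ _

/-- Cocycles of the complex `Hom_B(P •, N)`. -/
noncomputable def extCocycles {M : Type u} [AddCommGroup M] [Module B M] (R : ProjRes B M)
    (N : Type u) [AddCommGroup N] [Module B N] (n : ℕ) : AddSubgroup (homC R N n) :=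
  (extδ R N n).ker

/-- Coboundaries of the complex `Hom_B(P •, N)`. -/
noncomputable def extCobound {M : Type u} [AddCommGroup M] [Module B M] (R : ProjRes B M)
    (N : Type u) [AddCommGroup N] [Module B N] : (n : ℕ) → AddSubgroup (homC R N n)
  | 0 => ⊥
  | (m + 1) => (extδ R N m).range

/-- The Ext group `Ext_B^n(M, N)`, computed as the `n`-th cohomology of the complex
`Hom_B(P •, N)` for a projective resolution `P •` of `M`. -/
noncomputable def ExtGrp {M : Type u} [AddCommGroup M] [Module B M] (R : ProjRes B M)
    (N : Type u) [AddCommGroup N] [Module B N] (n : ℕ) : Type u :=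
  extCocycles R N n ⧸ (extCobound R N n).addSubgroupOf (extCocycles R N n)

variable (B)

/-- `Ext_B^n(M, B) ≠ 0` (computed with any projective resolution of `M`). -/
def ExtRegNonzero (M : Type u) [AddCommGroup M] [Module B M] (n : ℕ) : Prop :=
  ∃ R : ProjRes B M, Nontrivial (ExtGrp R B n)

/-- The grade of a module: the infimum of the `i` with `Ext^i(M, B) ≠ 0`. -/
noncomputable def gradeM (M : Type u) [AddCommGroup M] [Module B M] : ℕ∞ :=
  sInf ((fun n : ℕ => (n : ℕ∞)) '' {n | ExtRegNonzero B M n})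

/-- `B` is Auslander-Gorenstein if the regular module has finite injective dimension and
in a minimal injective coresolution `0 → B → I^0 → I^1 → ⋯` one has `pdim I^i ≤ i` for all
`i`. -/
def IsAuslanderGorenstein : Prop :=
  idim B B < ⊤ ∧ ∀ (R : MinInjCores B B) (i : ℕ), pdim B (R.I i) ≤ (i : ℕ∞)

/-- `B` has finite global dimension. -/
def HasFiniteGlobalDimension : Prop :=
  ∃ n : ℕ, ∀ (M : Type u) [AddCommGroup M] [Module B M], pdim B M ≤ (n : ℕ∞)

/-- `B` is Auslander regular if it is Auslander-Gorenstein of finite global dimension. -/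
def IsAuslanderRegular : Prop :=
  IsAuslanderGorenstein B ∧ HasFiniteGlobalDimension B

end Core

section Extras1

variable (B : Type u) [Ring B]

/-- A ring is Iwanaga-Gorenstein if it has finite injective dimension as a right module
and as a left module over itself.  (For `B = Aᵐᵒᵖ` this says that the algebra `A` is
Iwanaga-Gorenstein; right `A`-modules are left `Aᵐᵒᵖ`-modules.) -/
def IsIwanagaGorensteinAlg (A : Type u) [Ring A] : Prop :=
  idim Aᵐᵒᵖ Aᵐᵒᵖ < ⊤ ∧ idim A A < ⊤

/-- `f : S →ₗ[B] I` exhibits `I` as an injective envelope of `S`. -/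
def IsInjectiveEnvelope {S I : Type u} [AddCommGroup S] [Module B S]
    [AddCommGroup I] [Module B I] (f : S →ₗ[B] I) : Prop :=
  Module.Injective B I ∧ Function.Injective f ∧ IsEssentialSub (LinearMap.range f)

/-- `X` is (isomorphic to) a direct summand of `Y`. -/
def IsDirectSummandMod {X Y : Type u} [AddCommGroup X] [Module B X]
    [AddCommGroup Y] [Module B Y] : Prop :=
  ∃ (s : X →ₗ[B] Y) (r : Y →ₗ[B] X), r ∘ₗ s = LinearMap.id

/-- An indecomposable module: nonzero, and not the internal direct sum of two nonzero
submodules. -/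
def IsIndecomposableMod (M : Type u) [AddCommGroup M] [Module B M] : Prop :=
  Nontrivial M ∧ ∀ N₁ N₂ : Submodule B M, IsCompl N₁ N₂ → N₁ = ⊥ ∨ N₂ = ⊥

end Extras1

/-
If `pdim M ≤ n < grade S`, then `Ext^i(S, P) = 0` for all `i ≤ n` and every projective `P`:
`S` has a resolution by finitely generated free modules (`Aᵐᵒᵖ` is noetherian), and `Hom` out
of a finitely generated module commutes with direct sums, so vanishing against the regular
module passes to free modules and their summands. Dimension shifting along a resolution
`0 → P_n → ⋯ → P_0 → M → 0` then embeds `Hom(S, M)` into `Ext^(n+1)(S, 0) = 0`, which is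
absurd since `0 ≠ S ⊆ M`.
-/
theorem Finsupp.exists_finset_range_le_supported {B Q X ι : Type*} [Ring B] [AddCommGroup Q]
    [Module B Q] [Module.Finite B Q] [AddCommGroup X] [Module B X] (f : Q →ₗ[B] ι →₀ X) :
    ∃ s : Finset ι, LinearMap.range f ≤ Finsupp.supported X B (s : Set ι) := by
  classical
  obtain ⟨t, ht⟩ : (LinearMap.range f).FG := by
    rw [LinearMap.range_eq_map]
    exact Module.Finite.fg_top.map f
  refine ⟨t.biUnion Finsupp.support, ?_⟩
  rw [← ht, Submodule.span_le]
  intro v hv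
  rw [SetLike.mem_coe, Finsupp.mem_supported, Finset.coe_subset]
  exact Finset.subset_biUnion_of_mem _ hv

namespace ProjRes

variable {B : Type u} [Ring B] {N : Type u} [AddCommGroup N] [Module B N] (R : ProjRes B N)
  {X Y : Type u} [AddCommGroup X] [Module B X] [AddCommGroup Y] [Module B Y]
  {M : Type u} [AddCommGroup M] [Module B M]

def IsCoboundary : (i : ℕ) → (R.P i →ₗ[B] X) → Prop
  | 0, f => f = 0
  | j + 1, f => ∃ h : R.P j →ₗ[B] X, f = h ∘ₗ R.d j

variable (X) in
def ExtVanishes (i : ℕ) : Prop :=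
  ∀ f : R.P i →ₗ[B] X, f ∘ₗ R.d i = 0 → R.IsCoboundary i f

variable {R}

theorem IsCoboundary.comp {i : ℕ} {f : R.P i →ₗ[B] X} (hf : R.IsCoboundary i f)
    (g : X →ₗ[B] Y) : R.IsCoboundary i (g ∘ₗ f) := by
  cases i with
  | zero => exact (congrArg (g ∘ₗ ·) hf).trans (LinearMap.comp_zero g)
  | succ j =>
    obtain ⟨h, rfl⟩ := hf
    exact ⟨g ∘ₗ h, (LinearMap.comp_assoc _ _ _).symm⟩

theorem extVanishes_of_subsingleton [Subsingleton X] (i : ℕ) : R.ExtVanishes X i := by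
  intro f _
  cases i with
  | zero => exact Subsingleton.elim _ _
  | succ j => exact ⟨0, Subsingleton.elim _ _⟩

theorem extVanishes_of_subsingleton_extGrp {i : ℕ} (hsub : Subsingleton (ExtGrp R X i)) :
    R.ExtVanishes X i := by
  intro f hf
  have hcob : (f : homC R X i) ∈ extCobound R X i := by
    have h0 : (QuotientAddGroup.mk ⟨f, hf⟩ : ExtGrp R X i) = 0 := hsub.elim _ _
    exact AddSubgroup.mem_addSubgroupOf.mp ((QuotientAddGroup.eq_zero_iff _).mp h0)
  cases i with
  | zero => exact AddSubgroup.mem_bot.mp hcob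
  | succ j =>
    obtain ⟨h, hh⟩ := hcob
    exact ⟨h, hh.symm⟩

theorem ExtVanishes.of_retract {i : ℕ} (hX : R.ExtVanishes X i) (s : Y →ₗ[B] X)
    (t : X →ₗ[B] Y) (hts : t ∘ₗ s = LinearMap.id) : R.ExtVanishes Y i := by
  intro f hf
  have hsf := (hX (s ∘ₗ f) (by rw [LinearMap.comp_assoc, hf, LinearMap.comp_zero])).comp t
  rwa [← LinearMap.comp_assoc, hts, LinearMap.id_comp] at hsf

theorem ExtVanishes.of_linearEquiv {i : ℕ} (hX : R.ExtVanishes X i) (e : Y ≃ₗ[B] X) :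
    R.ExtVanishes Y i :=
  hX.of_retract e e.symm (by ext; simp)

theorem ExtVanishes.pi {i : ℕ} (hX : R.ExtVanishes X i) (ι : Type u) :
    R.ExtVanishes (ι → X) i := by
  intro f hf
  have hcoord (x : ι) : R.IsCoboundary i (LinearMap.proj x ∘ₗ f) :=
    hX _ (by rw [LinearMap.comp_assoc, hf, LinearMap.comp_zero])
  cases i with
  | zero =>
    ext q x
    exact LinearMap.congr_fun (hcoord x) q
  | succ j =>
    choose h hh using hcoord
    refine ⟨LinearMap.pi h, ?_⟩
    ext q x
    exact LinearMap.congr_fun (hh x) q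

theorem ExtVanishes.isCoboundary_of_range_le {i : ℕ} {W : Submodule B X}
    (hW : R.ExtVanishes W i) {f : R.P i →ₗ[B] X} (hfW : LinearMap.range f ≤ W)
    (hf : f ∘ₗ R.d i = 0) : R.IsCoboundary i f := by
  have hmem (x : R.P i) : f x ∈ W := hfW ⟨x, rfl⟩
  have hg : LinearMap.codRestrict W f hmem ∘ₗ R.d i = 0 := by
    ext x
    exact congrArg (· x) hf
  simpa only [LinearMap.subtype_comp_codRestrict] using (hW _ hg).comp W.subtype

theorem ExtVanishes.finsupp {i : ℕ} [Module.Finite B (R.P i)] (hX : R.ExtVanishes X i)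
    (ι : Type u) : R.ExtVanishes (ι →₀ X) i := by
  intro f hf
  obtain ⟨s, hs⟩ := Finsupp.exists_finset_range_le_supported f
  have hsupp : R.ExtVanishes (Finsupp.supported X B (s : Set ι)) i :=
    (hX.pi s).of_linearEquiv
      ((Finsupp.supportedEquivFinsupp (s : Set ι)).trans (Finsupp.linearEquivFunOnFinite B X s))
  exact hsupp.isCoboundary_of_range_le hs hf

theorem ExtVanishes.of_projective {i : ℕ} [Module.Finite B (R.P i)] (hB : R.ExtVanishes B i)
    (P : Type u) [AddCommGroup P] [Module B P] [Module.Projective B P] : R.ExtVanishes P i := by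
  obtain ⟨s, hs⟩ := Module.Projective.out (R := B) (P := P)
  exact (hB.finsupp P).of_retract s (Finsupp.linearCombination B id) (LinearMap.ext hs)

/-- Dimension shifting along `0 → ker p → P → Ω → 0`: the connecting map
`Ext^i(N, Ω) → Ext^(i+1)(N, ker p)` is injective as soon as `Ext^i(N, P) = 0`. -/
theorem not_extVanishes_succ_of_surjective {P Ω : Type u} [AddCommGroup P] [Module B P]
    [AddCommGroup Ω] [Module B Ω] {p : P →ₗ[B] Ω} (hp : Function.Surjective p)
    {K : Submodule B P} (hK : LinearMap.ker p = K) {i : ℕ} (hP : R.ExtVanishes P i)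
    (hΩ : ¬R.ExtVanishes Ω i) : ¬R.ExtVanishes K (i + 1) := by
  subst hK
  intro hK
  refine hΩ fun f hf => ?_
  have := R.proj i
  obtain ⟨F, rfl⟩ := Module.projective_lifting_property p f hp
  have hmem (x : R.P (i + 1)) : F (R.d i x) ∈ LinearMap.ker p :=
    LinearMap.congr_fun hf x
  set g := LinearMap.codRestrict (LinearMap.ker p) (F ∘ₗ R.d i) hmem
  have hg : g ∘ₗ R.d (i + 1) = 0 := by
    ext x
    exact congrArg F ((R.exact i).apply_apply_eq_zero x) |>.trans (map_zero F)
  obtain ⟨h, hgh⟩ := hK g hg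
  have hFh : (F - (LinearMap.ker p).subtype ∘ₗ h) ∘ₗ R.d i = 0 := by
    rw [LinearMap.sub_comp, LinearMap.comp_assoc, ← hgh, LinearMap.subtype_comp_codRestrict,
      sub_self]
  have hpk : p ∘ₗ (LinearMap.ker p).subtype = 0 := by
    ext x
    exact x.2
  simpa only [LinearMap.comp_sub, ← LinearMap.comp_assoc, hpk, LinearMap.zero_comp, sub_zero]
    using (hP _ hFh).comp p

theorem not_extVanishes_range_d (RM : ProjRes B M) {k : ℕ}
    (hP : ∀ i ≤ k, R.ExtVanishes (RM.P i) i) (hM : ¬R.ExtVanishes M 0) :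
    ¬R.ExtVanishes (LinearMap.range (RM.d k)) (k + 1) := by
  induction k with
  | zero =>
    exact not_extVanishes_succ_of_surjective RM.surj RM.exact_at_zero.linearMap_ker_eq
      (hP 0 le_rfl) hM
  | succ k ih =>
    refine not_extVanishes_succ_of_surjective (RM.d k).surjective_rangeRestrict ?_
      (hP (k + 1) le_rfl) (ih fun i hi => hP i (by omega))
    rw [LinearMap.ker_rangeRestrict, (RM.exact k).linearMap_ker_eq]

theorem linearMap_eq_zero_of_extVanishes (R : ProjRes B N) (hfin : ∀ i, Module.Finite B (R.P i))
    (RM : ProjRes B M) {n : ℕ} [Subsingleton (RM.P (n + 1))]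
    (hB : ∀ i ≤ n, R.ExtVanishes B i) (g : N →ₗ[B] M) : g = 0 := by
  by_contra hg
  have hM : ¬R.ExtVanishes M 0 := by
    intro hM
    have hgπ : g ∘ₗ R.π = 0 := hM _ <| by
      rw [LinearMap.comp_assoc, R.exact_at_zero.linearMap_comp_eq_zero, LinearMap.comp_zero]
    exact hg <| (LinearMap.cancel_right R.surj).1 (hgπ.trans (LinearMap.zero_comp _).symm)
  have hP (i : ℕ) (hi : i ≤ n) : R.ExtVanishes (RM.P i) i :=
    have := hfin i
    have := RM.proj i
    (hB i hi).of_projective _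
  have : Subsingleton (LinearMap.range (RM.d n)) := by
    rw [Submodule.subsingleton_iff_eq_bot, LinearMap.range_eq_bot]
    exact Subsingleton.elim _ _
  exact not_extVanishes_range_d RM hP hM (extVanishes_of_subsingleton _)

end ProjRes

section FiniteFreeResolution

variable (B : Type u) [Ring B] (X : Type u) [AddCommGroup X] [Module B X] [Module.Finite B X]

noncomputable def finCoverRank : ℕ :=
  (Module.Finite.exists_fin' B X).choose

noncomputable def finCover : (Fin (finCoverRank B X) → B) →ₗ[B] X :=
  (Module.Finite.exists_fin' B X).choose_spec.choose

theorem finCover_surjective : Function.Surjective (finCover B X) :=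
  (Module.Finite.exists_fin' B X).choose_spec.choose_spec

variable [IsNoetherianRing B]

/-- Syzygies are recorded as submodules of `Fin m → B`, so that the recursion produces data
rather than types. -/
noncomputable def finSyzygy : ℕ → Σ m : ℕ, Submodule B (Fin m → B)
  | 0 => ⟨finCoverRank B X, LinearMap.ker (finCover B X)⟩
  | k + 1 => ⟨finCoverRank B (finSyzygy k).2, LinearMap.ker (finCover B (finSyzygy k).2)⟩

noncomputable def finFreeResolution : ProjRes B X where
  P k := Fin (finSyzygy B X k).1 → B
  proj _ := inferInstance
  d k := (finSyzygy B X k).2.subtype ∘ₗ finCover B (finSyzygy B X k).2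
  π := finCover B X
  surj := finCover_surjective B X
  exact_at_zero := (finCover_surjective B (LinearMap.ker (finCover B X))).comp_exact_iff_exact.2
    (finCover B X).exact_subtype_ker_map
  exact k := (finSyzygy B X k).2.injective_subtype.comp_exact_iff_exact.2 <|
    (finCover_surjective B (LinearMap.ker (finCover B (finSyzygy B X k).2))).comp_exact_iff_exact.2
      (finCover B (finSyzygy B X k).2).exact_subtype_ker_map

end FiniteFreeResolution

theorem extVanishes_of_lt_gradeM {B N : Type u} [Ring B] [AddCommGroup N] [Module B N] {n : ℕ}
    (hn : (n : ℕ∞) < gradeM B N) (R : ProjRes B N) {i : ℕ} (hi : i ≤ n) :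
    R.ExtVanishes B i := by
  refine R.extVanishes_of_subsingleton_extGrp (not_nontrivial_iff_subsingleton.1 fun h => ?_)
  have : gradeM B N ≤ i := sInf_le ⟨i, ⟨R, h⟩, rfl⟩
  exact lt_irrefl _ (hn.trans_le (this.trans (Nat.cast_le.2 hi)))

theorem gradeM_le_pdim_of_ne_zero {B N M : Type u} [Ring B] [IsNoetherianRing B]
    [AddCommGroup N] [Module B N] [Module.Finite B N] [AddCommGroup M] [Module B M]
    {g : N →ₗ[B] M} (hg : g ≠ 0) :
    gradeM B N ≤ pdim B M := by
  refine le_sInf ?_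
  rintro _ ⟨n, ⟨RM, hRM⟩, rfl⟩
  by_contra! hn
  have : Subsingleton (RM.P (n + 1)) := hRM (n + 1) n.lt_succ_self
  have hfin (k : ℕ) : Module.Finite B ((finFreeResolution B N).P k) :=
    inferInstanceAs (Module.Finite B (Fin _ → B))
  exact hg <| (finFreeResolution B N).linearMap_eq_zero_of_extVanishes hfin RM
    (fun i hi => extVanishes_of_lt_gradeM hn _ hi) g

theorem statement_2_general (K A : Type u) [Field K] [Ring A] [Algebra K A] [FiniteDimensional K A]
    (M : Type u) [AddCommGroup M] [Module Aᵐᵒᵖ M]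
    (S : Submodule Aᵐᵒᵖ M) (hS : IsSimpleModule Aᵐᵒᵖ S) :
    gradeM Aᵐᵒᵖ S ≤ pdim Aᵐᵒᵖ M := by
  have : IsNoetherianRing Aᵐᵒᵖ := isNoetherian_of_tower K inferInstance
  have hS0 : S ≠ ⊥ := Submodule.nontrivial_iff_ne_bot.1 (IsSimpleModule.nontrivial Aᵐᵒᵖ S)
  exact gradeM_le_pdim_of_ne_zero (g := S.subtype) fun h =>
    hS0 (by simpa using congrArg LinearMap.range h)

/-- Let `A` be a finite dimensional algebra over a field `K`, let `M` be
a finitely generated right `A`-module and `S` a simple submodule of `M` of finite grade.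
Then `grade S ≤ pdim M`. -/
theorem statement_2 (K A : Type u) [Field K] [Ring A] [Algebra K A] [FiniteDimensional K A]
    (M : Type u) [AddCommGroup M] [Module Aᵐᵒᵖ M] (hM : Module.Finite Aᵐᵒᵖ M)
    (S : Submodule Aᵐᵒᵖ M) (hS : IsSimpleModule Aᵐᵒᵖ S)
    (hgrade : gradeM Aᵐᵒᵖ S < ⊤) :
    gradeM Aᵐᵒᵖ S ≤ pdim Aᵐᵒᵖ M :=
  statement_2_general K A M S hS
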